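/- Kim–Yoo's operators on the span of IGLT(λ)_m — π_i · T = T if i is not a descent of T, π_i · T = 0 if i is an attacking descent, and π_i · T = s_i · T (swapping all i's and (i+1)'s) if i is a non-attacking descent — are well defined; in particular, if i is a non-attacking descent of T ∈ IGLT(λ)_m with λ a two-row partition, then s_i · T is again an increasing gapless tableau of shape λ with maximum entry m. -/

import Mathlib

/-- A two-row tableau, given by its two rows (lists of entries). -/
structure TwoRowT where
  r1 : List ℕ
  r2 : List ℕ
deriving DecidableEq

/-- A "hook-plus" tableau: two rows together with the part of the first
column lying below the second row. -/
structure HookT where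
  r1 : List ℕ
  r2 : List ℕ
  col : List ℕ
deriving DecidableEq

/-- `T` is an increasing gapless tableau of shape `(l1,l2)` with maximum entry `m`. -/
def IsIGLT (l1 l2 m : ℕ) (T : TwoRowT) : Prop :=
  T.r1.length = l1 ∧ T.r2.length = l2 ∧
  T.r1.Chain' (· < ·) ∧ T.r2.Chain' (· < ·) ∧
  (∀ j, j < l2 → T.r1.getD j 0 < T.r2.getD j 0) ∧
  (∀ x ∈ T.r1, 1 ≤ x ∧ x ≤ m) ∧ (∀ x ∈ T.r2, 1 ≤ x ∧ x ≤ m) ∧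
  (∀ k, 1 ≤ k → k ≤ m → k ∈ T.r1 ∨ k ∈ T.r2) ∧
  (m ∈ T.r1 ∨ m ∈ T.r2)

/-- The set `A` of repeated entries of a two-row increasing tableau. -/
def setA (T : TwoRowT) : List ℕ := T.r1.filter (fun x => x ∈ T.r2)

/-- The set `B`: entries of the second row immediately to the right of an element of `A`. -/
def setB (T : TwoRowT) : List ℕ :=
  (T.r2.zip T.r2.tail).filterMap (fun p => if p.1 ∈ setA T then some p.2 else none)

/-- Pechenik's map `Φ_{λ;m}`. -/
def Phi (T : TwoRowT) : HookT :=
  ⟨T.r1.filter (fun x => x ∉ setA T),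
   T.r2.filter (fun x => x ∉ setB T),
   List.insertionSort (· ≤ ·) (setB T)⟩

/-- The shape of a hook-plus tableau, as a list. -/
def shapeOf (S : HookT) : List ℕ :=
  S.r1.length :: S.r2.length :: List.replicate S.col.length 1

/-- `S` is a standard Young tableau with entries `1,...,m`. -/
def IsSYTHook (m : ℕ) (S : HookT) : Prop :=
  S.r1.Chain' (· < ·) ∧ S.r2.Chain' (· < ·) ∧
  ((S.r1.take 1) ++ (S.r2.take 1) ++ S.col).Chain' (· < ·) ∧
  (∀ j, j < S.r2.length → S.r1.getD j 0 < S.r2.getD j 0) ∧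
  S.r2.length ≤ S.r1.length ∧
  (S.col ≠ [] → S.r2 ≠ []) ∧
  (S.r1 ++ S.r2 ++ S.col).Perm (List.range' 1 m)

/-- The shape `λ_m^{(1)} = (λ₁-k, λ₂-k, 1^k)`. -/
def lamShape1 (l1 l2 k : ℕ) : List ℕ := [l1 - k, l2 - k] ++ List.replicate k 1

/-- The shape `λ_m^{(2)} = (λ₁-k, λ₂-k+1, 1^(k-1))`. -/
def lamShape2 (l1 l2 k : ℕ) : List ℕ := [l1 - k, l2 - k + 1] ++ List.replicate (k - 1) 1

/-- The set `Par(λ;m)` of shapes occurring in Pechenik's expansion. -/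
def ParSet (l1 l2 n m : ℕ) : Set (List ℕ) :=
  {s | (n - m + 1 < l2 ∨ m = n) ∧ s = lamShape1 l1 l2 (n - m)} ∪
  {s | l1 ≠ l2 ∧ m < n ∧ n - m < l2 ∧ s = lamShape2 l1 l2 (n - m)}

/-- Row index (1-based) of the entry `x` in a hook-plus tableau. -/
def rowIdx (S : HookT) (x : ℕ) : ℕ :=
  if x ∈ S.r1 then 1 else if x ∈ S.r2 then 2 else 3 + S.col.idxOf x

/-- Column index (0-based) of the entry `x` in a hook-plus tableau. -/
def colIdx (S : HookT) (x : ℕ) : ℕ :=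
  if x ∈ S.r1 then S.r1.idxOf x else if x ∈ S.r2 then S.r2.idxOf x else 0

/-- Descent set of an increasing gapless two-row tableau with max entry `m`. -/
def desT (m : ℕ) (T : TwoRowT) : Finset ℕ :=
  (Finset.Ioo 0 m).filter (fun i => i ∈ T.r1 ∧ i + 1 ∈ T.r2)

/-- Descent set of a standard Young tableau with entries `1,...,m`. -/
def desS (m : ℕ) (S : HookT) : Finset ℕ :=
  (Finset.Ioo 0 m).filter (fun i => rowIdx S i < rowIdx S (i + 1))

def swapVal (i j x : ℕ) : ℕ := if x = i then j else if x = j then i else x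

/-- Swap the entries `i` and `j` in a two-row tableau. -/
def twoRowSwap (i j : ℕ) (T : TwoRowT) : TwoRowT :=
  ⟨T.r1.map (swapVal i j), T.r2.map (swapVal i j)⟩

/-- Swap the entries `i` and `j` in a hook-plus tableau. -/
def hookSwap (i j : ℕ) (S : HookT) : HookT :=
  ⟨S.r1.map (swapVal i j), S.r2.map (swapVal i j), S.col.map (swapVal i j)⟩

/-- Searles' 0-Hecke operator `π_i` on a standard Young tableau:
`some S` means the result is `S`, `none` means the result is `0`. -/
def searlesStep (i : ℕ) (S : HookT) : Option HookT :=
  if colIdx S i < colIdx S (i + 1) then some S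
  else if colIdx S i = colIdx S (i + 1) then none
  else some (hookSwap i (i + 1) S)

/-- Kim–Yoo's 0-Hecke operator `π_i` on an increasing gapless tableau. -/
def kyStep (i : ℕ) (T : TwoRowT) : Option TwoRowT :=
  if i ∈ T.r1 ∧ i + 1 ∈ T.r2 then
    if i ∉ T.r2 ∧ i + 1 ∉ T.r1 ∧ T.r2.idxOf (i + 1) < T.r1.idxOf i then
      some (twoRowSwap i (i + 1) T)
    else none
  else some T

/-- Searles' operator, extended linearly. -/
noncomputable def piOp (i : ℕ) : (HookT →₀ ℂ) →ₗ[ℂ] (HookT →₀ ℂ) :=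
  Finsupp.lsum ℂ fun S => (searlesStep i S).elim 0 fun S' => Finsupp.lsingle S'

/-- Kim–Yoo's operator, extended linearly. -/
noncomputable def kyOp (i : ℕ) : (TwoRowT →₀ ℂ) →ₗ[ℂ] (TwoRowT →₀ ℂ) :=
  Finsupp.lsum ℂ fun T => (kyStep i T).elim 0 fun T' => Finsupp.lsingle T'

/-- The data of the boxes occupied by repeated entries: for each repeated entry `i`,
the pair of (0-based) columns of its occurrence in row 1 and in row 2.
For two-row shapes this datum determines the pair `(Γ_i(T), T⁻¹(i))`. -/
def repPairs (T : TwoRowT) : Set (ℕ × ℕ) :=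
  {p | ∃ i, i ∈ T.r1 ∧ i ∈ T.r2 ∧ p = (T.r1.idxOf i, T.r2.idxOf i)}

/-- The Kim–Yoo equivalence `∼_{λ;m}` on two-row increasing gapless tableaux. -/
def equivKY (T1 T2 : TwoRowT) : Prop := repPairs T1 = repPairs T2

/-- The equivalence class of `T` in `IGLT(λ)_m` under `∼_{λ;m}`. -/
def classOf (l1 l2 m : ℕ) (T : TwoRowT) : Set TwoRowT :=
  {T' | IsIGLT l1 l2 m T' ∧ equivKY T T'}

/-- The columns (0-based) of the bottommost boxes of the repeated entries,
listed in increasing order of the repeated entries. -/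
def botCols (T : TwoRowT) : List ℕ :=
  (T.r1.filter (fun x => x ∈ T.r2)).map (fun i => T.r2.idxOf i)

/-- The partial order `⪯` on equivalence classes. -/
def classLE (C1 C2 : Set TwoRowT) : Prop :=
  ∃ T1 ∈ C1, ∃ T2 ∈ C2, List.Forall₂ (· ≤ ·) (botCols T1) (botCols T2)

open Classical in
/-- The fundamental quasisymmetric function `F_{comp(D)}` of degree `m`,
as a formal power series in the variables `x_0, x_1, x_2, ...`. -/
noncomputable def Fqs (m : ℕ) (D : Finset ℕ) : MvPowerSeries ℕ ℚ :=
  fun e =>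
    if ∃ f : Fin m → ℕ, Monotone f ∧
        (∀ j : ℕ, ∀ hj : j < m, 0 < j → j ∈ D → f ⟨j - 1, by omega⟩ < f ⟨j, hj⟩) ∧
        (∀ i : ℕ, e i = Nat.card {j : Fin m // f j = i})
    then 1 else 0

/-- The Schur function `s_μ = Σ_{S ∈ SYT(μ)} F_{comp(Des(S))}` (for shapes
representable as hook-plus tableaux). -/
noncomputable def schurF (m : ℕ) (μ : List ℕ) : MvPowerSeries ℕ ℚ :=
  ∑ᶠ S ∈ {S : HookT | IsSYTHook m S ∧ shapeOf S = μ}, Fqs m (desS m S)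

lemma swapVal_swapVal {i j x : ℕ} (hij : i ≠ j) : swapVal i j (swapVal i j x) = x := by
  simp only [swapVal]; split_ifs <;> omega

lemma mem_map_swapVal {i j x : ℕ} (hij : i ≠ j) (l : List ℕ) :
    x ∈ l.map (swapVal i j) ↔ swapVal i j x ∈ l := by
  simp only [List.mem_map]
  constructor
  · rintro ⟨a, ha', rfl⟩; rw [swapVal_swapVal hij]; exact ha'
  · intro h; exact ⟨swapVal i j x, h, swapVal_swapVal hij⟩

/-- The Kim–Yoo operators are well defined: if `i` is a non-attacking descent of
`T ∈ IGLT(λ)_m` with `λ` a two-row partition, then `s_i · T` (swapping `i` and `i+1`)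
is again an increasing gapless tableau of shape `λ` with maximum entry `m`. -/
theorem stmt_17 (l1 l2 n m : ℕ) (h2 : 1 ≤ l2) (h12 : l2 ≤ l1) (hn : n = l1 + l2)
    (T : TwoRowT) (hT : IsIGLT l1 l2 m T)
    (i : ℕ) (hi1 : 1 ≤ i) (hi2 : i < m)
    (ha : i ∈ T.r1) (hb : i ∉ T.r2) (hc : i + 1 ∈ T.r2) (hd : i + 1 ∉ T.r1)
    (hcol : T.r2.idxOf (i + 1) < T.r1.idxOf i) :
    IsIGLT l1 l2 m (twoRowSwap i (i + 1) T) := by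
  obtain ⟨hl1, hl2, hch1, hch2, hcols, hbd1, hbd2, hsurj, hm⟩ := hT
  have hne : i ≠ i + 1 := by omega
  have hpw1 : T.r1.Pairwise (· < ·) := List.isChain_iff_pairwise.mp hch1
  have hpw2 : T.r2.Pairwise (· < ·) := List.isChain_iff_pairwise.mp hch2
  have hnd1 : T.r1.Nodup := hpw1.imp (fun h => Nat.ne_of_lt h)
  have hnd2 : T.r2.Nodup := hpw2.imp (fun h => Nat.ne_of_lt h)
  simp only [IsIGLT, twoRowSwap, List.length_map]
  refine ⟨hl1, hl2, ?_, ?_, ?_, ?_, ?_, ?_, ?_⟩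
  · refine List.isChain_iff_pairwise.mpr ?_; rw [List.pairwise_map]
    refine hpw1.imp_of_mem (fun {a b} ha' hb' hab => ?_)
    have h1 : a ≠ i + 1 := fun h => hd (h ▸ ha')
    have h2 : b ≠ i + 1 := fun h => hd (h ▸ hb')
    simp only [swapVal]; split_ifs <;> omega
  · refine List.isChain_iff_pairwise.mpr ?_; rw [List.pairwise_map]
    refine hpw2.imp_of_mem (fun {a b} ha' hb' hab => ?_)
    have h1 : a ≠ i := fun h => hb (h ▸ ha')
    have h2 : b ≠ i := fun h => hb (h ▸ hb')
    simp only [swapVal]; split_ifs <;> omega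
  · intro j hj
    have hj1 : j < T.r1.length := by omega
    have hj2 : j < T.r2.length := by omega
    have hab : T.r1.getD j 0 < T.r2.getD j 0 := hcols j hj
    rw [List.getD_eq_getElem _ _ hj1, List.getD_eq_getElem _ _ hj2] at hab
    rw [List.getD_eq_getElem _ _ (by simpa using hj1), List.getD_eq_getElem _ _ (by simpa using hj2),
      List.getElem_map, List.getElem_map]
    have hmem1 : T.r1[j] ∈ T.r1 := List.getElem_mem hj1
    have hmem2 : T.r2[j] ∈ T.r2 := List.getElem_mem hj2
    have h1 : T.r1[j] ≠ i + 1 := fun h => hd (h ▸ hmem1)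
    have h2 : T.r2[j] ≠ i := fun h => hb (h ▸ hmem2)
    have hp : T.r1.idxOf i < T.r1.length := List.idxOf_lt_length_iff.mpr ha
    have hq : T.r2.idxOf (i+1) < T.r2.length := List.idxOf_lt_length_iff.mpr hc
    by_cases hai : T.r1[j] = i
    · have hjp : j = T.r1.idxOf i := by
        have : T.r1[j] = T.r1[T.r1.idxOf i] := by rw [List.getElem_idxOf hp, hai]
        exact (hnd1.getElem_inj_iff).mp this
      have hbne : T.r2[j] ≠ i + 1 := by
        intro h
        have : T.r2[j] = T.r2[T.r2.idxOf (i+1)] := by rw [List.getElem_idxOf hq, h]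
        have := (hnd2.getElem_inj_iff).mp this
        omega
      simp only [swapVal]; split_ifs <;> omega
    · by_cases hbi : T.r2[j] = i + 1
      · simp only [swapVal]; split_ifs <;> omega
      · simp only [swapVal]; split_ifs <;> omega
  · intro x hx
    obtain ⟨a, ha', rfl⟩ := List.mem_map.mp hx
    obtain ⟨hax, hay⟩ := hbd1 a ha'
    simp only [swapVal]; split_ifs <;> omega
  · intro x hx
    obtain ⟨a, ha', rfl⟩ := List.mem_map.mp hx
    obtain ⟨hax, hay⟩ := hbd2 a ha'
    simp only [swapVal]; split_ifs <;> omega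
  · intro k hk1 hkm
    have hk1' : 1 ≤ swapVal i (i+1) k := by simp only [swapVal]; split_ifs <;> omega
    have hkm' : swapVal i (i+1) k ≤ m := by simp only [swapVal]; split_ifs <;> omega
    rcases hsurj _ hk1' hkm' with h | h
    · exact Or.inl ((mem_map_swapVal hne _).mpr h)
    · exact Or.inr ((mem_map_swapVal hne _).mpr h)
  · by_cases hm' : i + 1 = m
    · exact Or.inl ((mem_map_swapVal hne _).mpr (by
        have : swapVal i (i+1) m = i := by simp only [swapVal]; split_ifs <;> omega
        rw [this]; exact ha))
    · have hsw : swapVal i (i+1) m = m := by simp only [swapVal]; split_ifs <;> omega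
      rcases hm with h | h
      · exact Or.inl ((mem_map_swapVal hne _).mpr (by rw [hsw]; exact h))
      · exact Or.inr ((mem_map_swapVal hne _).mpr (by rw [hsw]; exact h))
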